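/- The distance dist(p,q) = ‖log(p^{-1/2} q p^{-1/2})‖_F on positive definite matrices is invariant under congruence: dist(g p gᴴ, g q gᴴ) = dist(p, q) for every invertible matrix g. -/

import Mathlib

open Matrix
open scoped ComplexOrder
noncomputable section

/-- matrix exponential -/
def mexp {n : ℕ} (x : Matrix (Fin n) (Fin n) ℂ) : Matrix (Fin n) (Fin n) ℂ :=
  NormedSpace.exp x

/-- logarithm of a positive definite (Hermitian) matrix, via spectral decomposition -/
def mlog {n : ℕ} (p : Matrix (Fin n) (Fin n) ℂ) : Matrix (Fin n) (Fin n) ℂ :=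
  if h : p.IsHermitian then
    (h.eigenvectorUnitary : Matrix (Fin n) (Fin n) ℂ) *
      Matrix.diagonal (fun i => (Real.log (h.eigenvalues i) : ℂ)) *
      (star (h.eigenvectorUnitary : Matrix (Fin n) (Fin n) ℂ))
  else 0

/-- Frobenius norm -/
def frob {n : ℕ} (a : Matrix (Fin n) (Fin n) ℂ) : ℝ :=
  Real.sqrt (Matrix.trace (aᴴ * a)).re

/-- p^{1/2} for positive definite p -/
def psqrt {n : ℕ} (p : Matrix (Fin n) (Fin n) ℂ) : Matrix (Fin n) (Fin n) ℂ :=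
  mexp ((1/2 : ℝ) • mlog p)

/-- geodesic distance on positive definite matrices -/
def gdist {n : ℕ} (p q : Matrix (Fin n) (Fin n) ℂ) : ℝ :=
  frob (mlog ((psqrt p)⁻¹ * q * (psqrt p)⁻¹))

/-!
Write `s = p^{1/2}` and `t = (g p gᴴ)^{1/2}`. Since `t² = g s² gᴴ`, the matrix `u = t⁻¹ g s` is
unitary, and `t⁻¹ (g q gᴴ) t⁻¹ = u (s⁻¹ q s⁻¹) u⁻¹`. The logarithm, being a function of the
matrix in the sense of the functional calculus, commutes with conjugation by the unitary `u`,
and the Frobenius norm is invariant under unitary conjugation.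
-/

open Unitary

section Congruence

variable {ι R : Type*} [Fintype ι] [DecidableEq ι] [CommRing R] [StarRing R]

lemma Matrix.inv_mul_mul_mem_unitaryGroup_of_mul_self_eq {g s t : Matrix ι ι R}
    (hs : sᴴ = s) (ht : tᴴ = t) (ht_unit : IsUnit t) (hst : t * t = g * (s * s) * gᴴ) :
    t⁻¹ * g * s ∈ unitaryGroup ι R := by
  have ht_det : IsUnit t.det := (isUnit_iff_isUnit_det t).mp ht_unit
  rw [mem_unitaryGroup_iff, star_eq_conjTranspose, conjTranspose_mul, conjTranspose_mul, hs,
    conjTranspose_nonsing_inv, ht]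
  calc t⁻¹ * g * s * (s * (gᴴ * t⁻¹)) = t⁻¹ * (g * (s * s) * gᴴ) * t⁻¹ := by
        simp only [mul_assoc]
    _ = 1 := by rw [← hst, ← mul_assoc, nonsing_inv_mul t ht_det, one_mul, mul_nonsing_inv t ht_det]

lemma Matrix.inv_mul_mul_mul_inv_eq_conj {g s t : Matrix ι ι R} (hs : sᴴ = s) (ht : tᴴ = t)
    (hs_unit : IsUnit s) (q : Matrix ι ι R) :
    t⁻¹ * (g * q * gᴴ) * t⁻¹ = (t⁻¹ * g * s) * (s⁻¹ * q * s⁻¹) * star (t⁻¹ * g * s) := by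
  have hs_det : IsUnit s.det := (isUnit_iff_isUnit_det s).mp hs_unit
  rw [star_eq_conjTranspose, conjTranspose_mul, conjTranspose_mul, hs, conjTranspose_nonsing_inv,
    ht]
  calc t⁻¹ * (g * q * gᴴ) * t⁻¹ = t⁻¹ * g * (s * s⁻¹) * q * (s⁻¹ * s) * gᴴ * t⁻¹ := by
        rw [mul_nonsing_inv s hs_det, nonsing_inv_mul s hs_det, mul_one, mul_one]
        simp only [mul_assoc]
    _ = t⁻¹ * g * s * (s⁻¹ * q * s⁻¹) * (s * (gᴴ * t⁻¹)) := by simp only [mul_assoc]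

end Congruence

lemma Matrix.PosDef.pos_of_mem_spectrum {ι 𝕜 : Type*} [Fintype ι] [DecidableEq ι] [RCLike 𝕜]
    {A : Matrix ι ι 𝕜} (hA : A.PosDef) {t : ℝ} (ht : t ∈ spectrum ℝ A) : 0 < t := by
  obtain ⟨i, rfl⟩ := hA.1.spectrum_real_eq_range_eigenvalues ▸ ht
  exact hA.eigenvalues_pos i

variable {n : ℕ} {A u : Matrix (Fin n) (Fin n) ℂ}

lemma mlog_eq_cfc (hA : A.IsHermitian) : mlog A = cfc Real.log A := by
  rw [mlog, dif_pos hA, hA.cfc_eq]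
  rfl

-- `NormedSpace.exp` does not depend on the norm; the L2 operator norm is chosen only because it
-- makes matrices a normed algebra compatible with the functional calculus.
open scoped Matrix.Norms.L2Operator in
lemma mexp_cfc (hA : IsSelfAdjoint A) (f : ℝ → ℝ) :
    mexp (cfc f A) = cfc (fun t => Real.exp (f t)) A := by
  rw [cfc_comp' Real.exp f A (hf := finite_real_spectrum.continuousOn f)]
  exact (CFC.real_exp_eq_normedSpace_exp (a := cfc f A)).symm

lemma mlog_unitary_conj (hu : u ∈ unitary (Matrix (Fin n) (Fin n) ℂ)) :
    mlog (u * A * star u) = u * mlog A * star u := by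
  by_cases hA : A.IsHermitian
  · rw [mlog_eq_cfc hA, mlog_eq_cfc (IsSelfAdjoint.conjugate hA u)]
    have hφ : Continuous (conjStarAlgAut ℝ _ ⟨u, hu⟩) := by
      show Continuous fun B => u * B * star u
      fun_prop
    exact (StarAlgHomClass.map_cfc (S := ℝ) (conjStarAlgAut ℝ _ ⟨u, hu⟩) Real.log A
      (finite_real_spectrum.continuousOn _) hφ).symm
  · -- both sides are the junk value `0`
    have huA : ¬ (u * A * star u).IsHermitian := fun h => hA <| by
      have hA_eq : star u * (u * A * star u) * star (star u) = A := by
        calc star u * (u * A * star u) * star (star u) = (star u * u) * A * (star u * u) := by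
              simp only [star_star, mul_assoc]
          _ = A := by rw [star_mul_self_of_mem hu, one_mul, mul_one]
      exact hA_eq ▸ IsSelfAdjoint.conjugate h (star u)
    simp only [mlog, dif_neg hA, dif_neg huA, mul_zero, zero_mul]

lemma frob_unitary_conj (hu : u ∈ unitary (Matrix (Fin n) (Fin n) ℂ)) :
    frob (u * A * star u) = frob A := by
  have hconj : (u * A * star u)ᴴ * (u * A * star u) = u * (Aᴴ * A) * star u := by
    calc (u * A * star u)ᴴ * (u * A * star u) = u * Aᴴ * (star u * u) * A * star u := by
          simp only [← star_eq_conjTranspose, star_mul, star_star, mul_assoc]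
      _ = u * (Aᴴ * A) * star u := by
          rw [star_mul_self_of_mem hu, mul_one, mul_assoc u]
  rw [frob, frob, hconj, trace_mul_cycle, star_mul_self_of_mem hu, one_mul]

lemma psqrt_eq_cfc (hA : A.PosDef) :
    psqrt A = cfc (fun t => Real.exp (1 / 2 * Real.log t)) A := by
  rw [psqrt, mlog_eq_cfc hA.1, ← cfc_const_mul _ _ _ (finite_real_spectrum.continuousOn _),
    mexp_cfc hA.1]

lemma conjTranspose_psqrt (hA : A.PosDef) : (psqrt A)ᴴ = psqrt A := by
  rw [psqrt_eq_cfc hA]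
  exact cfc_predicate (R := ℝ) (p := IsSelfAdjoint) _ A

lemma psqrt_mul_self (hA : A.PosDef) : psqrt A * psqrt A = A := by
  rw [psqrt_eq_cfc hA, ← cfc_mul _ _ A (finite_real_spectrum.continuousOn _)
    (finite_real_spectrum.continuousOn _)]
  conv_rhs => rw [← cfc_id' ℝ A hA.1]
  refine cfc_congr fun t ht => ?_
  rw [← Real.exp_add, ← add_mul, add_halves, one_mul, Real.exp_log (hA.pos_of_mem_spectrum ht)]

lemma isUnit_psqrt (hA : A.PosDef) : IsUnit (psqrt A) := by
  rw [psqrt_eq_cfc hA]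
  exact (isUnit_cfc_iff _ A (finite_real_spectrum.continuousOn _) hA.1).mpr
    fun t _ => (Real.exp_pos _).ne'

theorem gdist_congruence_invariant_general {n : ℕ} (p q g : Matrix (Fin n) (Fin n) ℂ)
    (hp : p.PosDef) (hg : IsUnit g) :
    gdist (g * p * gᴴ) (g * q * gᴴ) = gdist p q := by
  have hgp : (g * p * gᴴ).PosDef := (IsUnit.posDef_star_right_conjugate_iff hg).mpr hp
  have hu : (psqrt (g * p * gᴴ))⁻¹ * g * psqrt p ∈ unitary (Matrix (Fin n) (Fin n) ℂ) :=
    inv_mul_mul_mem_unitaryGroup_of_mul_self_eq (conjTranspose_psqrt hp)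
      (conjTranspose_psqrt hgp) (isUnit_psqrt hgp)
      (by rw [psqrt_mul_self hp, psqrt_mul_self hgp])
  rw [gdist, gdist, inv_mul_mul_mul_inv_eq_conj (conjTranspose_psqrt hp) (conjTranspose_psqrt hgp)
    (isUnit_psqrt hp), mlog_unitary_conj hu, frob_unitary_conj hu]

/-- The geodesic distance on positive definite matrices is invariant under congruence:
`dist(g p gᴴ, g q gᴴ) = dist(p, q)` for invertible `g`. -/
theorem gdist_congruence_invariant {n : ℕ} (p q g : Matrix (Fin n) (Fin n) ℂ)
    (hp : p.PosDef) (hq : q.PosDef) (hg : IsUnit g) :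
    gdist (g * p * gᴴ) (g * q * gᴴ) = gdist p q :=
  gdist_congruence_invariant_general p q g hp hg
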